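/- arXiv:2212.06615 — 8 statements merged into one kernel-verified Lean document; each statement's English description precedes it below -/
import Mathlib

section
/- Let C be a symmetric monoidal category with braiding β, equipped for every object X with morphisms δ_X : X ⟶ X ⊗ X and ε_X : X ⟶ 𝟙 forming a cocommutative comonoid (coassociative; counital: δ_X ≫ (ε_X ▷ X) ≫ λ_X = 𝟙_X = δ_X ≫ (X ◁ ε_Y) ≫ ρ_X; and δ_X ≫ β_{X,X} = δ_X), such that δ and ε are natural in X (f ≫ δ_Y = δ_X ≫ (f ⊗ f) and f ≫ ε_Y = ε_X for every f : X ⟶ Y) and coherent with the tensor: ε_𝟙 = 𝟙_𝟙, δ_𝟙 = λ_𝟙⁻¹, ε_{X⊗Y} = (ε_X ⊗ ε_Y) ≫ λ_𝟙, and δ_{X⊗Y} = (δ_X ⊗ δ_Y) ≫ (X ◁ β_{X,Y} ▷ Y) modulo associators. Then every tensor X ⊗ Y is a categorical product of X and Y: with projections π₁ = (X ◁ ε_Y) ≫ ρ_X and π₂ = (ε_X ▷ Y) ≫ λ_Y, the map h ↦ (h ≫ π₁, h ≫ π₂) is a bijection Hom(Z, X ⊗ Y) ≅ Hom(Z, X)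 × Hom(Z, Y) for every object Z, with inverse (f, g) ↦ δ_Z ≫ (f ⊗ g). (Coherent natural commutative comonoids make a symmetric monoidal category cartesian.) -/
open CategoryTheory MonoidalCategory

/-!
The counit `ε` discards a factor, so `π₁ = (X ◁ ε Y) ≫ ρ_X` and `π₂ = (ε X ▷ Y) ≫ λ_Y` are
candidate projections. Naturality of `ε` and counitality give `δ_Z ≫ (f ⊗ g) ≫ πᵢ = f, g`.
Conversely, naturality of `δ` turns `δ_Z ≫ (h ≫ π₁ ⊗ h ≫ π₂)` into `h ≫ δ_{X⊗Y} ≫ (π₁ ⊗ π₂)`,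
and `δ_{X⊗Y} ≫ (π₁ ⊗ π₂) = 𝟙` because, after the middle braiding in `δ_{X⊗Y}`, discarding the
two inner factors is the same as discarding them before braiding.
-/

section Braided

variable {C : Type*} [Category C] [MonoidalCategory C] [BraidedCategory C]

lemma tensorμ_tensorUnit_comp_rightUnitor_tensorHom_leftUnitor (X Y : C) :
    tensorμ X (𝟙_ C) (𝟙_ C) Y ≫ ((ρ_ X).hom ⊗ₘ (λ_ Y).hom) = (ρ_ X).hom ⊗ₘ (λ_ Y).hom := by
  simp only [tensorμ, braiding_tensorUnit_left]
  monoidal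

lemma tensorμ_comp_discard_tensorHom_discard {X X' Y' Y : C} (e : X' ⟶ 𝟙_ C) (f : Y' ⟶ 𝟙_ C) :
    tensorμ X X' Y' Y ≫ (((X ◁ f) ≫ (ρ_ X).hom) ⊗ₘ ((e ▷ Y) ≫ (λ_ Y).hom)) =
      ((X ◁ e) ≫ (ρ_ X).hom) ⊗ₘ ((f ▷ Y) ≫ (λ_ Y).hom) := by
  have naturality := tensorμ_natural_assoc (𝟙 X) e f (𝟙 Y) ((ρ_ X).hom ⊗ₘ (λ_ Y).hom)
  simp only [id_tensorHom, tensorHom_id, tensorHom_comp_tensorHom] at naturality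
  rw [← naturality, tensorμ_tensorUnit_comp_rightUnitor_tensorHom_leftUnitor, tensorHom_comp_tensorHom]

end Braided

section Comonoid

variable {C : Type*} [Category C] [MonoidalCategory C]
  (δ : ∀ X : C, X ⟶ X ⊗ X) (ε : ∀ X : C, X ⟶ 𝟙_ C)

lemma comul_tensorHom_comp_fst
    (counit_right : ∀ X : C, δ X ≫ (X ◁ ε X) ≫ (ρ_ X).hom = 𝟙 X)
    (ε_nat : ∀ {X Y : C} (f : X ⟶ Y), f ≫ ε Y = ε X) {X Y Z : C} (f : Z ⟶ X) (g : Z ⟶ Y) :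
    (δ Z ≫ (f ⊗ₘ g)) ≫ (X ◁ ε Y) ≫ (ρ_ X).hom = f := by
  rw [MonoidalCategory.tensorHom_def, Category.assoc, Category.assoc, ← whiskerLeft_comp_assoc, ε_nat g,
    ← whisker_exchange_assoc, rightUnitor_naturality, reassoc_of% counit_right Z]

lemma comul_tensorHom_comp_snd
    (counit_left : ∀ X : C, δ X ≫ (ε X ▷ X) ≫ (λ_ X).hom = 𝟙 X)
    (ε_nat : ∀ {X Y : C} (f : X ⟶ Y), f ≫ ε Y = ε X) {X Y Z : C} (f : Z ⟶ X) (g : Z ⟶ Y) :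
    (δ Z ≫ (f ⊗ₘ g)) ≫ (ε X ▷ Y) ≫ (λ_ Y).hom = g := by
  rw [tensorHom_def', Category.assoc, Category.assoc, ← comp_whiskerRight_assoc, ε_nat f,
    whisker_exchange_assoc, leftUnitor_naturality, reassoc_of% counit_left Z]

lemma comul_tensor_comp_fst_tensorHom_snd [BraidedCategory C]
    (counit_left : ∀ X : C, δ X ≫ (ε X ▷ X) ≫ (λ_ X).hom = 𝟙 X)
    (counit_right : ∀ X : C, δ X ≫ (X ◁ ε X) ≫ (ρ_ X).hom = 𝟙 X)
    (δ_tensor : ∀ X Y : C, δ (X ⊗ Y) = (δ X ⊗ₘ δ Y) ≫ tensorμ X X Y Y) (X Y : C) :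
    δ (X ⊗ Y) ≫ (((X ◁ ε Y) ≫ (ρ_ X).hom) ⊗ₘ ((ε X ▷ Y) ≫ (λ_ Y).hom)) = 𝟙 (X ⊗ Y) := by
  rw [δ_tensor, Category.assoc, tensorμ_comp_discard_tensorHom_discard, tensorHom_comp_tensorHom,
    counit_right, counit_left, id_tensorHom_id]

lemma comul_comp_fst_tensorHom_comp_snd [BraidedCategory C]
    (counit_left : ∀ X : C, δ X ≫ (ε X ▷ X) ≫ (λ_ X).hom = 𝟙 X)
    (counit_right : ∀ X : C, δ X ≫ (X ◁ ε X) ≫ (ρ_ X).hom = 𝟙 X)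
    (δ_nat : ∀ {X Y : C} (f : X ⟶ Y), f ≫ δ Y = δ X ≫ (f ⊗ₘ f))
    (δ_tensor : ∀ X Y : C, δ (X ⊗ Y) = (δ X ⊗ₘ δ Y) ≫ tensorμ X X Y Y) {X Y Z : C}
    (h : Z ⟶ X ⊗ Y) :
    δ Z ≫ ((h ≫ (X ◁ ε Y) ≫ (ρ_ X).hom) ⊗ₘ (h ≫ (ε X ▷ Y) ≫ (λ_ Y).hom)) = h := by
  rw [← tensorHom_comp_tensorHom, ← Category.assoc, ← δ_nat, Category.assoc,
    comul_tensor_comp_fst_tensorHom_snd δ ε counit_left counit_right δ_tensor, Category.comp_id]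

end Comonoid

theorem stmt_1_general {C : Type*} [Category C] [MonoidalCategory C] [SymmetricCategory C]
    (δ : ∀ X : C, X ⟶ X ⊗ X) (ε : ∀ X : C, X ⟶ 𝟙_ C)
    (counit_left : ∀ X : C, δ X ≫ (ε X ▷ X) ≫ (λ_ X).hom = 𝟙 X)
    (counit_right : ∀ X : C, δ X ≫ (X ◁ ε X) ≫ (ρ_ X).hom = 𝟙 X)
    (δ_nat : ∀ {X Y : C} (f : X ⟶ Y), f ≫ δ Y = δ X ≫ (f ⊗ₘ f))
    (ε_nat : ∀ {X Y : C} (f : X ⟶ Y), f ≫ ε Y = ε X)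
    (δ_tensor : ∀ X Y : C, δ (X ⊗ Y) = (δ X ⊗ₘ δ Y) ≫ tensorμ X X Y Y) :
    ∀ X Y Z : C,
      (∀ (f : Z ⟶ X) (g : Z ⟶ Y),
        (δ Z ≫ (f ⊗ₘ g)) ≫ (X ◁ ε Y) ≫ (ρ_ X).hom = f ∧
        (δ Z ≫ (f ⊗ₘ g)) ≫ (ε X ▷ Y) ≫ (λ_ Y).hom = g) ∧
      (∀ h : Z ⟶ X ⊗ Y,
        δ Z ≫ ((h ≫ (X ◁ ε Y) ≫ (ρ_ X).hom) ⊗ₘ (h ≫ (ε X ▷ Y) ≫ (λ_ Y).hom)) = h) :=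
  fun _ _ _ =>
    ⟨fun f g => ⟨comul_tensorHom_comp_fst δ ε counit_right ε_nat f g,
        comul_tensorHom_comp_snd δ ε counit_left ε_nat f g⟩,
      comul_comp_fst_tensorHom_comp_snd δ ε counit_left counit_right δ_nat δ_tensor⟩

/-- Coherent natural commutative comonoids make a symmetric monoidal category cartesian:
with projections `π₁ = (X ◁ ε Y) ≫ ρ_X` and `π₂ = (ε X ▷ Y) ≫ λ_Y`, the map
`h ↦ (h ≫ π₁, h ≫ π₂)` is a bijection `Hom(Z, X ⊗ Y) ≅ Hom(Z, X) × Hom(Z, Y)` with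
inverse `(f, g) ↦ δ_Z ≫ (f ⊗ g)`. -/
theorem stmt_1 {C : Type*} [Category C] [MonoidalCategory C] [SymmetricCategory C]
    (δ : ∀ X : C, X ⟶ X ⊗ X) (ε : ∀ X : C, X ⟶ 𝟙_ C)
    (coassoc : ∀ X : C, δ X ≫ (δ X ▷ X) ≫ (α_ X X X).hom = δ X ≫ (X ◁ δ X))
    (counit_left : ∀ X : C, δ X ≫ (ε X ▷ X) ≫ (λ_ X).hom = 𝟙 X)
    (counit_right : ∀ X : C, δ X ≫ (X ◁ ε X) ≫ (ρ_ X).hom = 𝟙 X)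
    (cocomm : ∀ X : C, δ X ≫ (β_ X X).hom = δ X)
    (δ_nat : ∀ {X Y : C} (f : X ⟶ Y), f ≫ δ Y = δ X ≫ (f ⊗ₘ f))
    (ε_nat : ∀ {X Y : C} (f : X ⟶ Y), f ≫ ε Y = ε X)
    (ε_unit : ε (𝟙_ C) = 𝟙 (𝟙_ C))
    (δ_unit : δ (𝟙_ C) = (λ_ (𝟙_ C)).inv)
    (ε_tensor : ∀ X Y : C, ε (X ⊗ Y) = (ε X ⊗ₘ ε Y) ≫ (λ_ (𝟙_ C)).hom)
    (δ_tensor : ∀ X Y : C, δ (X ⊗ Y) = (δ X ⊗ₘ δ Y) ≫ tensorμ X X Y Y) :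
    ∀ X Y Z : C,
      (∀ (f : Z ⟶ X) (g : Z ⟶ Y),
        (δ Z ≫ (f ⊗ₘ g)) ≫ (X ◁ ε Y) ≫ (ρ_ X).hom = f ∧
        (δ Z ≫ (f ⊗ₘ g)) ≫ (ε X ▷ Y) ≫ (λ_ Y).hom = g) ∧
      (∀ h : Z ⟶ X ⊗ Y,
        δ Z ≫ ((h ≫ (X ◁ ε Y) ≫ (ρ_ X).hom) ⊗ₘ (h ≫ (ε X ▷ Y) ≫ (λ_ Y).hom)) = h) :=
  stmt_1_general δ ε counit_left counit_right δ_nat ε_nat δ_tensor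
end

section
/- Let (μ, η, δ, ε) be a Frobenius algebra on an object A of a monoidal category C. Then A is self-dual: the morphisms coev := η ≫ δ : 𝟙 ⟶ A ⊗ A and ev := μ ≫ ε : A ⊗ A ⟶ 𝟙 satisfy the two zig-zag (snake) identities, i.e. they exhibit (A, A) as an exact pairing, so A is both a left and a right dual of itself. -/
open CategoryTheory MonoidalCategory

/-- A Frobenius algebra `(μ, η, δ, ε)` on an object `A` of a monoidal category makes `A`
self-dual: `coev := η ≫ δ` and `ev := μ ≫ ε` satisfy the two zig-zag (snake) identities,
exhibiting `(A, A)` as an exact pairing, so `A` is both a left and a right dual of itself. -/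
theorem stmt_3 {C : Type*} [Category C] [MonoidalCategory C] {A : C}
    (μ : A ⊗ A ⟶ A) (η : 𝟙_ C ⟶ A) (δ : A ⟶ A ⊗ A) (ε : A ⟶ 𝟙_ C)
    (mul_assoc' : (μ ▷ A) ≫ μ = (α_ A A A).hom ≫ (A ◁ μ) ≫ μ)
    (one_mul' : (η ▷ A) ≫ μ = (λ_ A).hom)
    (mul_one' : (A ◁ η) ≫ μ = (ρ_ A).hom)
    (coassoc : δ ≫ (δ ▷ A) ≫ (α_ A A A).hom = δ ≫ (A ◁ δ))
    (counit_left : δ ≫ (ε ▷ A) = (λ_ A).inv)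
    (counit_right : δ ≫ (A ◁ ε) = (ρ_ A).inv)
    (frobenius_left : (δ ▷ A) ≫ (α_ A A A).hom ≫ (A ◁ μ) = μ ≫ δ)
    (frobenius_right : (A ◁ δ) ≫ (α_ A A A).inv ≫ (μ ▷ A) = μ ≫ δ) :
    ((A ◁ (η ≫ δ)) ≫ (α_ A A A).inv ≫ ((μ ≫ ε) ▷ A) = (ρ_ A).hom ≫ (λ_ A).inv) ∧
    (((η ≫ δ) ▷ A) ≫ (α_ A A A).hom ≫ (A ◁ (μ ≫ ε)) = (λ_ A).hom ≫ (ρ_ A).inv) ∧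
    Nonempty (ExactPairing A A) ∧
    Nonempty (HasLeftDual A) ∧ Nonempty (HasRightDual A) := by
  have h1 : (A ◁ (η ≫ δ)) ≫ (α_ A A A).inv ≫ ((μ ≫ ε) ▷ A) = (ρ_ A).hom ≫ (λ_ A).inv := by
    calc (A ◁ (η ≫ δ)) ≫ (α_ A A A).inv ≫ ((μ ≫ ε) ▷ A)
        = (A ◁ η) ≫ ((A ◁ δ) ≫ (α_ A A A).inv ≫ (μ ▷ A)) ≫ (ε ▷ A) := by
          simp [MonoidalCategory.whiskerLeft_comp, comp_whiskerRight]
      _ = (A ◁ η) ≫ μ ≫ δ ≫ (ε ▷ A) := by rw [frobenius_right]; simp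
      _ = (ρ_ A).hom ≫ (λ_ A).inv := by
          rw [counit_left, reassoc_of% mul_one']
  have h2 : ((η ≫ δ) ▷ A) ≫ (α_ A A A).hom ≫ (A ◁ (μ ≫ ε)) = (λ_ A).hom ≫ (ρ_ A).inv := by
    calc ((η ≫ δ) ▷ A) ≫ (α_ A A A).hom ≫ (A ◁ (μ ≫ ε))
        = (η ▷ A) ≫ ((δ ▷ A) ≫ (α_ A A A).hom ≫ (A ◁ μ)) ≫ (A ◁ ε) := by
          simp [MonoidalCategory.whiskerLeft_comp, comp_whiskerRight]
      _ = (η ▷ A) ≫ μ ≫ δ ≫ (A ◁ ε) := by rw [frobenius_left]; simp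
      _ = (λ_ A).hom ≫ (ρ_ A).inv := by
          rw [counit_right, reassoc_of% one_mul']
  have ep : ExactPairing A A :=
    { coevaluation' := η ≫ δ
      evaluation' := μ ≫ ε
      coevaluation_evaluation' := h1
      evaluation_coevaluation' := h2 }
  exact ⟨h1, h2, ⟨ep⟩, ⟨{ leftDual := A, exact := ep }⟩, ⟨{ rightDual := A, exact := ep }⟩⟩
end

section
/- (Pair of pants) Let X and Y be objects of a monoidal category C with an exact pairing (coev₁ : 𝟙 ⟶ X ⊗ Y, ev₁ : Y ⊗ X ⟶ 𝟙) and an exact pairing in the opposite direction (coev₂ : 𝟙 ⟶ Y ⊗ X, ev₂ : X ⊗ Y ⟶ 𝟙). Then the object X ⊗ Y carries a Frobenius algebra structure with multiplication μ = (X ◁ ev₁ ▷ Y) modulo associators, unit η = coev₁, comultiplication δ = (X ◁ coev₂ ▷ Y) modulo associators, and counit ε = ev₂: these data satisfy the monoid axioms, the comonoid axioms, and the Frobenius law. -/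
/-!
Each identity is a planar move on the string diagram of `X ◁ (-) ▷ Y`. Associativity,
coassociativity and the two Frobenius laws compare two orders of placing a pair of caps
`ev₁` and/or cups `coev₂` side by side, so they are instances of the interchange law
(`tensorHom_def` against `tensorHom_def'`). The four unit laws straighten a zig-zag, so they
are the snake identities of the pairing `(coev₁, ev₁)` for the monoid and of `(coev₂, ev₂)`
for the comonoid.
-/

open CategoryTheory MonoidalCategory

variable {C : Type*} [Category C] [MonoidalCategory C]

/-- Pair of pants multiplication: `X ◁ ev₁ ▷ Y` modulo associators. -/
noncomputable def pantsMul (X Y : C) [ExactPairing X Y] :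
    (X ⊗ Y) ⊗ (X ⊗ Y) ⟶ X ⊗ Y :=
  (α_ X Y (X ⊗ Y)).hom ≫ (X ◁ ((α_ Y X Y).inv ≫ ((ε_ X Y) ▷ Y) ≫ (λ_ Y).hom))

/-- Pair of pants unit: the coevaluation `coev₁`. -/
noncomputable def pantsUnit (X Y : C) [ExactPairing X Y] : 𝟙_ C ⟶ X ⊗ Y :=
  η_ X Y

/-- Pair of pants comultiplication: `X ◁ coev₂ ▷ Y` modulo associators. -/
noncomputable def pantsComul (X Y : C) [ExactPairing Y X] :
    X ⊗ Y ⟶ (X ⊗ Y) ⊗ (X ⊗ Y) :=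
  (X ◁ ((λ_ Y).inv ≫ ((η_ Y X) ▷ Y) ≫ (α_ Y X Y).hom)) ≫ (α_ X Y (X ⊗ Y)).inv

/-- Pair of pants counit: the evaluation `ev₂`. -/
noncomputable def pantsCounit (X Y : C) [ExactPairing Y X] : X ⊗ Y ⟶ 𝟙_ C :=
  ε_ Y X

section Pants

variable (X Y : C)

theorem pants_mul_assoc [ExactPairing X Y] :
    (pantsMul X Y ▷ (X ⊗ Y)) ≫ pantsMul X Y =
      (α_ (X ⊗ Y) (X ⊗ Y) (X ⊗ Y)).hom ≫ ((X ⊗ Y) ◁ pantsMul X Y) ≫ pantsMul X Y := by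
  dsimp only [pantsMul]
  calc _ = 𝟙 _ ⊗≫ X ◁ (ε_ X Y ⊗ₘ ε_ X Y) ▷ Y ⊗≫ 𝟙 _ := by rw [MonoidalCategory.tensorHom_def]; monoidal
    _ = _ := by rw [tensorHom_def']; monoidal

theorem pants_one_mul [ExactPairing X Y] :
    (pantsUnit X Y ▷ (X ⊗ Y)) ≫ pantsMul X Y = (λ_ (X ⊗ Y)).hom := by
  dsimp only [pantsMul, pantsUnit]
  calc _ = 𝟙 _ ⊗≫ (η_ X Y ▷ X ≫ (α_ X Y X).hom ≫ X ◁ ε_ X Y) ▷ Y ⊗≫ 𝟙 _ := by monoidal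
    _ = _ := by rw [ExactPairing.evaluation_coevaluation]; monoidal

theorem pants_mul_one [ExactPairing X Y] :
    ((X ⊗ Y) ◁ pantsUnit X Y) ≫ pantsMul X Y = (ρ_ (X ⊗ Y)).hom := by
  dsimp only [pantsMul, pantsUnit]
  calc _ = 𝟙 _ ⊗≫ X ◁ (Y ◁ η_ X Y ≫ (α_ Y X Y).inv ≫ ε_ X Y ▷ Y) ⊗≫ 𝟙 _ := by monoidal
    _ = _ := by rw [ExactPairing.coevaluation_evaluation]; monoidal

theorem pants_comul_assoc [ExactPairing Y X] :
    pantsComul X Y ≫ (pantsComul X Y ▷ (X ⊗ Y)) ≫ (α_ (X ⊗ Y) (X ⊗ Y) (X ⊗ Y)).hom =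
      pantsComul X Y ≫ ((X ⊗ Y) ◁ pantsComul X Y) := by
  dsimp only [pantsComul]
  calc _ = 𝟙 _ ⊗≫ X ◁ (η_ Y X ⊗ₘ η_ Y X) ▷ Y ⊗≫ 𝟙 _ := by rw [tensorHom_def']; monoidal
    _ = _ := by rw [MonoidalCategory.tensorHom_def]; monoidal

theorem pants_counit_comul [ExactPairing Y X] :
    pantsComul X Y ≫ (pantsCounit X Y ▷ (X ⊗ Y)) = (λ_ (X ⊗ Y)).inv := by
  dsimp only [pantsComul, pantsCounit]
  calc _ = 𝟙 _ ⊗≫ (X ◁ η_ Y X ≫ (α_ X Y X).inv ≫ ε_ Y X ▷ X) ▷ Y ⊗≫ 𝟙 _ := by monoidal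
    _ = _ := by rw [ExactPairing.coevaluation_evaluation]; monoidal

theorem pants_comul_counit [ExactPairing Y X] :
    pantsComul X Y ≫ ((X ⊗ Y) ◁ pantsCounit X Y) = (ρ_ (X ⊗ Y)).inv := by
  dsimp only [pantsComul, pantsCounit]
  calc _ = 𝟙 _ ⊗≫ X ◁ (η_ Y X ▷ Y ≫ (α_ Y X Y).hom ≫ Y ◁ ε_ Y X) ⊗≫ 𝟙 _ := by monoidal
    _ = _ := by rw [ExactPairing.evaluation_coevaluation]; monoidal

theorem pants_frobenius_left [ExactPairing X Y] [ExactPairing Y X] :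
    (pantsComul X Y ▷ (X ⊗ Y)) ≫ (α_ (X ⊗ Y) (X ⊗ Y) (X ⊗ Y)).hom ≫
        ((X ⊗ Y) ◁ pantsMul X Y) = pantsMul X Y ≫ pantsComul X Y := by
  dsimp only [pantsMul, pantsComul]
  calc _ = 𝟙 _ ⊗≫ X ◁ (η_ Y X ⊗ₘ ε_ X Y) ▷ Y ⊗≫ 𝟙 _ := by rw [MonoidalCategory.tensorHom_def]; monoidal
    _ = _ := by rw [tensorHom_def']; monoidal

theorem pants_frobenius_right [ExactPairing X Y] [ExactPairing Y X] :
    ((X ⊗ Y) ◁ pantsComul X Y) ≫ (α_ (X ⊗ Y) (X ⊗ Y) (X ⊗ Y)).inv ≫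
        (pantsMul X Y ▷ (X ⊗ Y)) = pantsMul X Y ≫ pantsComul X Y := by
  dsimp only [pantsMul, pantsComul]
  calc _ = 𝟙 _ ⊗≫ X ◁ (ε_ X Y ⊗ₘ η_ Y X) ▷ Y ⊗≫ 𝟙 _ := by rw [tensorHom_def']; monoidal
    _ = _ := by rw [MonoidalCategory.tensorHom_def]; monoidal

end Pants

/-- (Pair of pants) Given an exact pairing `(coev₁ : 𝟙 ⟶ X ⊗ Y, ev₁ : Y ⊗ X ⟶ 𝟙)` and an
exact pairing in the opposite direction `(coev₂ : 𝟙 ⟶ Y ⊗ X, ev₂ : X ⊗ Y ⟶ 𝟙)`, the object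
`X ⊗ Y` carries a Frobenius algebra structure with multiplication `X ◁ ev₁ ▷ Y`, unit
`coev₁`, comultiplication `X ◁ coev₂ ▷ Y` and counit `ev₂`: these satisfy the monoid
axioms, the comonoid axioms and the Frobenius law. -/
theorem stmt_4 (X Y : C) [ExactPairing X Y] [ExactPairing Y X] :
    -- monoid axioms
    ((pantsMul X Y ▷ (X ⊗ Y)) ≫ pantsMul X Y =
      (α_ (X ⊗ Y) (X ⊗ Y) (X ⊗ Y)).hom ≫ ((X ⊗ Y) ◁ pantsMul X Y) ≫ pantsMul X Y) ∧
    ((pantsUnit X Y ▷ (X ⊗ Y)) ≫ pantsMul X Y = (λ_ (X ⊗ Y)).hom) ∧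
    (((X ⊗ Y) ◁ pantsUnit X Y) ≫ pantsMul X Y = (ρ_ (X ⊗ Y)).hom) ∧
    -- comonoid axioms
    (pantsComul X Y ≫ (pantsComul X Y ▷ (X ⊗ Y)) ≫ (α_ (X ⊗ Y) (X ⊗ Y) (X ⊗ Y)).hom =
      pantsComul X Y ≫ ((X ⊗ Y) ◁ pantsComul X Y)) ∧
    (pantsComul X Y ≫ (pantsCounit X Y ▷ (X ⊗ Y)) = (λ_ (X ⊗ Y)).inv) ∧
    (pantsComul X Y ≫ ((X ⊗ Y) ◁ pantsCounit X Y) = (ρ_ (X ⊗ Y)).inv) ∧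
    -- Frobenius law
    ((pantsComul X Y ▷ (X ⊗ Y)) ≫ (α_ (X ⊗ Y) (X ⊗ Y) (X ⊗ Y)).hom ≫
        ((X ⊗ Y) ◁ pantsMul X Y) = pantsMul X Y ≫ pantsComul X Y) ∧
    (((X ⊗ Y) ◁ pantsComul X Y) ≫ (α_ (X ⊗ Y) (X ⊗ Y) (X ⊗ Y)).inv ≫
        (pantsMul X Y ▷ (X ⊗ Y)) = pantsMul X Y ≫ pantsComul X Y) :=
  ⟨pants_mul_assoc X Y, pants_one_mul X Y, pants_mul_one X Y, pants_comul_assoc X Y,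
    pants_counit_comul X Y, pants_comul_counit X Y, pants_frobenius_left X Y,
    pants_frobenius_right X Y⟩
end

section
/- (A bialgebra which is also a Frobenius algebra is trivial) Let A be an object of a monoidal category carrying a Frobenius algebra (μ, η, δ, ε) which in addition satisfies the bialgebra compatibility equations η ≫ δ = λ_𝟙⁻¹ ≫ (η ⊗ η), μ ≫ ε = (ε ⊗ ε) ≫ λ_𝟙, and η ≫ ε = 𝟙_𝟙. Then ε ≫ η = 𝟙_A; hence ε : A ⟶ 𝟙 and η : 𝟙 ⟶ A are mutually inverse and A is isomorphic to the monoidal unit. -/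
/-!
Sandwich the Frobenius law `μ ≫ δ = (δ ▷ A) ≫ α ≫ (A ◁ μ)` between the unit `η ▷ A` and the
counit `A ◁ ε`. On the left side the unit and counit laws collapse everything to `𝟙 A`. On
the right side the bialgebra equations turn `η ≫ δ` into `η ⊗ η` and `μ ≫ ε` into `ε ⊗ ε`;
the two inner legs meet in the scalar `η ≫ ε = 𝟙`, and what is left is `ε ≫ η`.
-/

open CategoryTheory MonoidalCategory

section

variable {C : Type*} [Category C] [MonoidalCategory C] {A : C}

lemma whiskerRight_unit_tensor_assoc_whiskerLeft_counit_tensor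
    (η : 𝟙_ C ⟶ A) (ε : A ⟶ 𝟙_ C) (hηε : η ≫ ε = 𝟙 (𝟙_ C)) :
    (((λ_ (𝟙_ C)).inv ≫ (η ⊗ₘ η)) ▷ A) ≫ (α_ A A A).hom ≫ (A ◁ ((ε ⊗ₘ ε) ≫ (λ_ (𝟙_ C)).hom))
      = (λ_ A).hom ≫ ε ≫ η ≫ (ρ_ A).inv := by
  simp only [MonoidalCategory.tensorHom_def, comp_whiskerRight, whiskerLeft_comp, Category.assoc]
  slice_lhs 3 4 => rw [associator_naturality_middle]
  slice_lhs 4 5 => rw [← whiskerLeft_comp, ← comp_whiskerRight, hηε]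
  simp only [id_whiskerRight, whiskerLeft_id, Category.id_comp]
  rw [associator_naturality_left_assoc, ← whisker_exchange_assoc]
  monoidal

lemma unit_mul_comul_counit_eq_id
    (μ : A ⊗ A ⟶ A) (η : 𝟙_ C ⟶ A) (δ : A ⟶ A ⊗ A) (ε : A ⟶ 𝟙_ C)
    (hη : (η ▷ A) ≫ μ = (λ_ A).hom) (hε : δ ≫ (A ◁ ε) = (ρ_ A).inv) :
    (λ_ A).inv ≫ ((η ▷ A) ≫ (μ ≫ δ) ≫ (A ◁ ε)) ≫ (ρ_ A).hom = 𝟙 A := by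
  simp only [Category.assoc]
  rw [reassoc_of% hη, reassoc_of% hε]
  simp

end

theorem stmt_7_general {C : Type*} [Category C] [MonoidalCategory C] {A : C}
    (μ : A ⊗ A ⟶ A) (η : 𝟙_ C ⟶ A) (δ : A ⟶ A ⊗ A) (ε : A ⟶ 𝟙_ C)
    (one_mul' : (η ▷ A) ≫ μ = (λ_ A).hom)
    (counit_right : δ ≫ (A ◁ ε) = (ρ_ A).inv)
    (frobenius_left : (δ ▷ A) ≫ (α_ A A A).hom ≫ (A ◁ μ) = μ ≫ δ)
    (compat_comul_unit : η ≫ δ = (λ_ (𝟙_ C)).inv ≫ (η ⊗ₘ η))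
    (compat_mul_counit : μ ≫ ε = (ε ⊗ₘ ε) ≫ (λ_ (𝟙_ C)).hom)
    (compat_unit_counit : η ≫ ε = 𝟙 (𝟙_ C)) :
    ε ≫ η = 𝟙 A ∧ Nonempty (A ≅ 𝟙_ C) := by
  have hεη : ε ≫ η = 𝟙 A := by
    rw [← unit_mul_comul_counit_eq_id μ η δ ε one_mul' counit_right,
      ← frobenius_left]
    have sandwich : (η ▷ A) ≫ ((δ ▷ A) ≫ (α_ A A A).hom ≫ (A ◁ μ)) ≫ (A ◁ ε)
        = ((η ≫ δ) ▷ A) ≫ (α_ A A A).hom ≫ (A ◁ (μ ≫ ε)) := by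
      simp only [comp_whiskerRight, whiskerLeft_comp, Category.assoc]
    rw [sandwich, compat_comul_unit, compat_mul_counit,
      whiskerRight_unit_tensor_assoc_whiskerLeft_counit_tensor η ε compat_unit_counit]
    simp
  exact ⟨hεη, ⟨⟨ε, η, hεη, compat_unit_counit⟩⟩⟩

/-- A bialgebra which is also a Frobenius algebra is trivial: if a Frobenius algebra
`(μ, η, δ, ε)` on `A` moreover satisfies the bialgebra compatibility equations
`η ≫ δ = λ⁻¹ ≫ (η ⊗ η)`, `μ ≫ ε = (ε ⊗ ε) ≫ λ` and `η ≫ ε = 𝟙`, then `ε ≫ η = 𝟙 A`;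
hence `ε` and `η` are mutually inverse and `A` is isomorphic to the monoidal unit. -/
theorem stmt_7 {C : Type*} [Category C] [MonoidalCategory C] {A : C}
    (μ : A ⊗ A ⟶ A) (η : 𝟙_ C ⟶ A) (δ : A ⟶ A ⊗ A) (ε : A ⟶ 𝟙_ C)
    (mul_assoc' : (μ ▷ A) ≫ μ = (α_ A A A).hom ≫ (A ◁ μ) ≫ μ)
    (one_mul' : (η ▷ A) ≫ μ = (λ_ A).hom)
    (mul_one' : (A ◁ η) ≫ μ = (ρ_ A).hom)
    (coassoc : δ ≫ (δ ▷ A) ≫ (α_ A A A).hom = δ ≫ (A ◁ δ))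
    (counit_left : δ ≫ (ε ▷ A) = (λ_ A).inv)
    (counit_right : δ ≫ (A ◁ ε) = (ρ_ A).inv)
    (frobenius_left : (δ ▷ A) ≫ (α_ A A A).hom ≫ (A ◁ μ) = μ ≫ δ)
    (frobenius_right : (A ◁ δ) ≫ (α_ A A A).inv ≫ (μ ▷ A) = μ ≫ δ)
    (compat_comul_unit : η ≫ δ = (λ_ (𝟙_ C)).inv ≫ (η ⊗ₘ η))
    (compat_mul_counit : μ ≫ ε = (ε ⊗ₘ ε) ≫ (λ_ (𝟙_ C)).hom)
    (compat_unit_counit : η ≫ ε = 𝟙 (𝟙_ C)) :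
    ε ≫ η = 𝟙 A ∧ Nonempty (A ≅ 𝟙_ C) :=
  stmt_7_general μ η δ ε one_mul' counit_right frobenius_left compat_comul_unit compat_mul_counit
    compat_unit_counit
end

section
/- Let f : ℤ → ℤ be monotone and unbounded in both directions, i.e. for every m there is n with m ≤ f(n) and for every m there is n with f(n) ≤ m. Then: (a) for every m ∈ ℤ the set {n | m ≤ f(n)} is nonempty and bounded below, so fˡ(m) := min{n | m ≤ f(n)} is well-defined; (b) fˡ is a left adjoint of f, i.e. the Galois connection fˡ(m) ≤ n ⟺ m ≤ f(n) holds for all m, n (in particular fˡ(f(m)) ≤ m ≤ f(fˡ(m)) for all m); (c) fˡ is itself monotone and unbounded in both directions; and symmetrically, (d) fʳ(m) := max{n | f(n) ≤ m} is well-defined, satisfies the Galois connection f(n) ≤ m ⟺ n ≤ fʳ(m), and is monotone and unbounded in both directions. Hence the monoid of monotone unbounded functions ℤ → ℤ under composition, with the pointwise order, is a pregroup: every element has both a left and a right adjoint. -/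
/-- Monotone unbounded functions `ℤ → ℤ` form a pregroup: every monotone function `f`
that is unbounded in both directions has a left adjoint `fˡ(m) = min {n | m ≤ f n}` and a
right adjoint `fʳ(m) = max {n | f n ≤ m}`, both monotone and unbounded in both directions,
satisfying the Galois connections `fˡ(m) ≤ n ↔ m ≤ f(n)` and `f(n) ≤ m ↔ n ≤ fʳ(m)`. -/
theorem stmt_9 (f : ℤ → ℤ) (hmono : Monotone f)
    (hup : ∀ m : ℤ, ∃ n : ℤ, m ≤ f n) (hdown : ∀ m : ℤ, ∃ n : ℤ, f n ≤ m) :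
    -- (a) the set {n | m ≤ f n} is nonempty and bounded below
    (∀ m : ℤ, {n : ℤ | m ≤ f n}.Nonempty ∧ BddBelow {n : ℤ | m ≤ f n}) ∧
    ∃ fl fr : ℤ → ℤ,
      -- fˡ(m) is the least element of {n | m ≤ f n}
      (∀ m : ℤ, m ≤ f (fl m) ∧ ∀ n : ℤ, m ≤ f n → fl m ≤ n) ∧
      -- (b) fˡ is a left adjoint of f
      GaloisConnection fl f ∧
      (∀ m : ℤ, fl (f m) ≤ m ∧ m ≤ f (fl m)) ∧
      -- (c) fˡ is monotone and unbounded in both directions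
      Monotone fl ∧ (∀ m : ℤ, ∃ n : ℤ, m ≤ fl n) ∧ (∀ m : ℤ, ∃ n : ℤ, fl n ≤ m) ∧
      -- (d) fʳ(m) is the greatest element of {n | f n ≤ m}
      (∀ m : ℤ, f (fr m) ≤ m ∧ ∀ n : ℤ, f n ≤ m → n ≤ fr m) ∧
      -- fʳ is a right adjoint of f
      GaloisConnection f fr ∧
      (∀ m : ℤ, f (fr m) ≤ m ∧ m ≤ fr (f m)) ∧
      -- fʳ is monotone and unbounded in both directions
      Monotone fr ∧ (∀ m : ℤ, ∃ n : ℤ, m ≤ fr n) ∧ (∀ m : ℤ, ∃ n : ℤ, fr n ≤ m) := by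
  have hbb : ∀ m : ℤ, BddBelow {n : ℤ | m ≤ f n} := by
    intro m
    obtain ⟨k, hk⟩ := hdown (m - 1)
    refine ⟨k, fun n hn => ?_⟩
    by_contra h
    push_neg at h
    have := hmono h.le
    simp only [Set.mem_setOf_eq] at hn
    omega
  have hba : ∀ m : ℤ, BddAbove {n : ℤ | f n ≤ m} := by
    intro m
    obtain ⟨k, hk⟩ := hup (m + 1)
    refine ⟨k, fun n hn => ?_⟩
    by_contra h
    push_neg at h
    have := hmono h.le
    simp only [Set.mem_setOf_eq] at hn
    omega
  have hne1 : ∀ m : ℤ, ({n : ℤ | m ≤ f n}).Nonempty := fun m => hup m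
  have hne2 : ∀ m : ℤ, ({n : ℤ | f n ≤ m}).Nonempty := fun m => hdown m
  set fl : ℤ → ℤ := fun m => sInf {n : ℤ | m ≤ f n} with hfl
  set fr : ℤ → ℤ := fun m => sSup {n : ℤ | f n ≤ m} with hfr
  have hfl_mem : ∀ m, m ≤ f (fl m) := fun m => Int.csInf_mem (hne1 m) (hbb m)
  have hfl_le : ∀ m n, m ≤ f n → fl m ≤ n := fun m n h => csInf_le (hbb m) h
  have hfr_mem : ∀ m, f (fr m) ≤ m := fun m => Int.csSup_mem (hne2 m) (hba m)
  have hfr_ge : ∀ m n, f n ≤ m → n ≤ fr m := fun m n h => le_csSup (hba m) h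
  have gc1 : GaloisConnection fl f := by
    intro m n
    constructor
    · intro h; exact (hfl_mem m).trans (hmono h)
    · exact hfl_le m n
  have gc2 : GaloisConnection f fr := by
    intro n m
    constructor
    · exact hfr_ge m n
    · intro h; exact (hmono h).trans (hfr_mem m)
  refine ⟨fun m => ⟨hne1 m, hbb m⟩, fl, fr, fun m => ⟨hfl_mem m, hfl_le m⟩,
    gc1, fun m => ⟨gc1.l_le le_rfl, hfl_mem m⟩, gc1.monotone_l, ?_, ?_,
    fun m => ⟨hfr_mem m, hfr_ge m⟩, gc2, fun m => ⟨hfr_mem m, gc2.le_u le_rfl⟩,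
    gc2.monotone_u, ?_, ?_⟩
  · intro m
    refine ⟨f (m - 1) + 1, ?_⟩
    by_contra h
    push_neg at h
    have h2 : fl (f (m - 1) + 1) ≤ m - 1 := by omega
    have := (gc1 _ _).mp h2
    omega
  · intro m
    exact ⟨f m, gc1.l_le le_rfl⟩
  · intro m
    exact ⟨f m, gc2.le_u le_rfl⟩
  · intro m
    refine ⟨f (m + 1) - 1, ?_⟩
    by_contra h
    push_neg at h
    have h2 : m + 1 ≤ fr (f (m + 1) - 1) := by omega
    have := (gc2 _ _).mpr h2
    omega
end

section
/- (Parameter-shift rule) Let H be an n×n complex Hermitian matrix whose eigenvalues are contained in {r, −r} for some real r > 0, equivalently Hᴴ = H and H·H = r²·1, and let U(θ) = Matrix.exp(ℂ, (I·θ) • H) be the one-parameter unitary group it generates. Then there is a shift s > 0 (one may take any s with sin(r·s) = 1/2, e.g. s = π/(6r)) such that for all θ ∈ ℝ the derivative of U at θ equals r • (U(θ + s) − U(θ − s)); that is, HasDerivAt U (r • (U(θ+s) − U(θ−s))) θ, this common value being (I • H) * U(θ). -/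
attribute [local instance] Matrix.normedAddCommGroup Matrix.normedSpace

/-!
Since `H * H = r² • 1`, the even and odd parts of the exponential series collapse onto `1` and
`H`, so `U(θ) = cos (rθ) • 1 + (i sin (rθ) / r) • H`. Both `U'(θ)` and the shift difference are
then read off from this closed form: `r • (U(θ + s) - U(θ - s)) = 2 sin (rs) • (i H) U(θ)` by the
addition formulas, and `2 sin (rs) = 1` for `s = π / (6r)`.
-/

open Complex

section PowOfMulSelf

variable {R A : Type*} [CommSemiring R] [Semiring A] [Algebra R A] {a : A} {b : R}

theorem pow_two_mul_of_mul_self_eq_smul_one (ha : a * a = b • 1) (k : ℕ) :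
    a ^ (2 * k) = b ^ k • 1 := by
  rw [pow_mul, sq, ha, smul_pow, one_pow]

theorem pow_two_mul_add_one_of_mul_self_eq_smul_one (ha : a * a = b • 1) (k : ℕ) :
    a ^ (2 * k + 1) = b ^ k • a := by
  rw [pow_succ, pow_two_mul_of_mul_self_eq_smul_one ha, smul_one_mul]

end PowOfMulSelf

section ExpOfMulSelf

variable {A : Type*} [Ring A] [Algebra ℂ A] [TopologicalSpace A] [IsTopologicalRing A]
  [ContinuousSMul ℂ A] [T2Space A] {a : A} {c : ℂ}

theorem exp_smul_of_mul_self_eq_sq_smul_one (hc : c ≠ 0) (ha : a * a = c ^ 2 • 1) (z : ℂ) :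
    NormedSpace.exp (z • a) = cosh (c * z) • 1 + (sinh (c * z) / c) • a := by
  rw [NormedSpace.exp_eq_tsum ℂ]
  refine HasSum.tsum_eq (HasSum.even_add_odd ?_ ?_)
  · convert (hasSum_cosh (c * z)).smul_const (1 : A) using 2 with k
    rw [smul_pow, pow_two_mul_of_mul_self_eq_smul_one ha, smul_smul, smul_smul]
    congr 1
    ring
  · convert (hasSum_sinh (c * z)).div_const c |>.smul_const a using 2 with k
    rw [smul_pow, pow_two_mul_add_one_of_mul_self_eq_smul_one ha, smul_smul, smul_smul]
    congr 1
    field_simp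
    ring

theorem exp_I_mul_smul_of_mul_self_eq_sq_smul_one (hc : c ≠ 0) (ha : a * a = c ^ 2 • 1)
    (t : ℂ) : NormedSpace.exp ((I * t) • a) = cos (c * t) • 1 + (I * sin (c * t) / c) • a := by
  rw [exp_smul_of_mul_self_eq_sq_smul_one hc ha, show c * (I * t) = c * t * I by ring,
    cosh_mul_I, sinh_mul_I, mul_comm (sin _)]

theorem I_smul_mul_exp_I_mul_smul (hc : c ≠ 0) (ha : a * a = c ^ 2 • 1) (t : ℂ) :
    (I • a) * NormedSpace.exp ((I * t) • a) =
      (-(c * sin (c * t))) • 1 + (I * cos (c * t)) • a := by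
  rw [exp_I_mul_smul_of_mul_self_eq_sq_smul_one hc ha, mul_add, smul_mul_smul_comm,
    smul_mul_smul_comm, mul_one, ha]
  match_scalars
  · field_simp
  · field_simp
    linear_combination sin (c * t) * I_sq

theorem smul_exp_I_mul_add_sub_exp_I_mul_sub (hc : c ≠ 0) (ha : a * a = c ^ 2 • 1) (θ s : ℂ) :
    c • (NormedSpace.exp ((I * (θ + s)) • a) - NormedSpace.exp ((I * (θ - s)) • a)) =
      (2 * sin (c * s)) • ((I • a) * NormedSpace.exp ((I * θ) • a)) := by
  rw [exp_I_mul_smul_of_mul_self_eq_sq_smul_one hc ha,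
    exp_I_mul_smul_of_mul_self_eq_sq_smul_one hc ha, I_smul_mul_exp_I_mul_smul hc ha,
    mul_add, mul_sub, cos_add, cos_sub, sin_add, sin_sub]
  match_scalars
  · ring
  · field_simp
    ring

end ExpOfMulSelf

theorem hasDerivAt_cos_smul_add_sin_smul {E : Type*} [NormedAddCommGroup E] [NormedSpace ℂ E]
    {c : ℂ} (hc : c ≠ 0) (u v : E) (θ : ℝ) :
    HasDerivAt (fun t : ℝ => cos (c * t) • u + (I * sin (c * t) / c) • v)
      ((-(c * sin (c * θ))) • u + (I * cos (c * θ)) • v) θ := by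
  have hlin : HasDerivAt (fun z : ℂ => c * z) c θ := by
    simpa using (hasDerivAt_id (θ : ℂ)).const_mul c
  have hcos : HasDerivAt (fun t : ℝ => cos (c * t)) (-(c * sin (c * θ))) θ := by
    simpa [mul_comm] using hlin.ccos.comp_ofReal
  have hsin : HasDerivAt (fun t : ℝ => I * sin (c * t) / c) (I * cos (c * θ)) θ := by
    refine ((hlin.csin.comp_ofReal.const_mul I).div_const c).congr_deriv ?_
    field_simp
  exact (hcos.smul_const u).add (hsin.smul_const v)

theorem stmt_14_general {n : ℕ} (H : Matrix (Fin n) (Fin n) ℂ) (r : ℝ) (hr : 0 < r)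
    (hsq : H * H = ((r : ℂ) ^ 2) • (1 : Matrix (Fin n) (Fin n) ℂ)) :
    ∃ s : ℝ, 0 < s ∧ Real.sin (r * s) = 1 / 2 ∧
      ∀ θ : ℝ,
        HasDerivAt (fun t : ℝ => NormedSpace.exp ((Complex.I * (t : ℂ)) • H))
          (r • (NormedSpace.exp ((Complex.I * ((θ + s : ℝ) : ℂ)) • H) -
            NormedSpace.exp ((Complex.I * ((θ - s : ℝ) : ℂ)) • H))) θ ∧
        r • (NormedSpace.exp ((Complex.I * ((θ + s : ℝ) : ℂ)) • H) -
            NormedSpace.exp ((Complex.I * ((θ - s : ℝ) : ℂ)) • H)) =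
          (Complex.I • H) * NormedSpace.exp ((Complex.I * (θ : ℂ)) • H) := by
  have hr0 : (r : ℂ) ≠ 0 := mod_cast hr.ne'
  have hsin : Real.sin (r * (Real.pi / (6 * r))) = 1 / 2 := by
    rw [show r * (Real.pi / (6 * r)) = Real.pi / 6 by field_simp, Real.sin_pi_div_six]
  refine ⟨Real.pi / (6 * r), by positivity, hsin, fun θ => ?_⟩
  have hshift : r • (NormedSpace.exp ((I * ((θ + Real.pi / (6 * r) : ℝ) : ℂ)) • H) -
      NormedSpace.exp ((I * ((θ - Real.pi / (6 * r) : ℝ) : ℂ)) • H)) =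
        (I • H) * NormedSpace.exp ((I * (θ : ℂ)) • H) := by
    rw [← coe_smul, ofReal_add, ofReal_sub, smul_exp_I_mul_add_sub_exp_I_mul_sub hr0 hsq,
      ← ofReal_mul, ← ofReal_sin, hsin]
    norm_num
  refine ⟨?_, hshift⟩
  rw [hshift, I_smul_mul_exp_I_mul_smul hr0 hsq]
  simp_rw [exp_I_mul_smul_of_mul_self_eq_sq_smul_one hr0 hsq]
  exact hasDerivAt_cos_smul_add_sin_smul hr0 1 H θ

/-- Parameter-shift rule: if `H` is an `n×n` Hermitian matrix with `H·H = r²·1` for some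
`r > 0` (so its eigenvalues lie in `{r, −r}`), and `U(θ) = exp((I·θ) • H)`, then there is a
shift `s > 0` with `sin(r·s) = 1/2` such that for all `θ` the derivative of `U` at `θ`
equals `r • (U(θ+s) − U(θ−s))`, this common value being `(I • H) * U(θ)`. -/
theorem stmt_14 {n : ℕ} (H : Matrix (Fin n) (Fin n) ℂ) (r : ℝ) (hr : 0 < r)
    (hherm : H.conjTranspose = H)
    (hsq : H * H = ((r : ℂ) ^ 2) • (1 : Matrix (Fin n) (Fin n) ℂ)) :
    ∃ s : ℝ, 0 < s ∧ Real.sin (r * s) = 1 / 2 ∧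
      ∀ θ : ℝ,
        HasDerivAt (fun t : ℝ => NormedSpace.exp ((Complex.I * (t : ℂ)) • H))
          (r • (NormedSpace.exp ((Complex.I * ((θ + s : ℝ) : ℂ)) • H) -
            NormedSpace.exp ((Complex.I * ((θ - s : ℝ) : ℂ)) • H))) θ ∧
        r • (NormedSpace.exp ((Complex.I * ((θ + s : ℝ) : ℂ)) • H) -
            NormedSpace.exp ((Complex.I * ((θ - s : ℝ) : ℂ)) • H)) =
          (Complex.I • H) * NormedSpace.exp ((Complex.I * (θ : ℂ)) • H) :=
  stmt_14_general H r hr hsq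
end

section
/- (Stone's theorem, finite dimensions) For each n ∈ ℕ there is a one-to-one correspondence between continuous one-parameter unitary groups of n×n complex matrices and Hermitian n×n complex matrices: (i) if U : ℝ → Matrix (Fin n) (Fin n) ℂ is continuous, U(0) = 1, U(θ)·U(θ') = U(θ + θ') for all θ, θ', and U(θ) is unitary for every θ, then there exists a unique Hermitian matrix H with U(θ) = Matrix.exp(ℂ, (I·θ) • H) for all θ ∈ ℝ (and H = −i·U'(0)); (ii) conversely, for every Hermitian H the map θ ↦ Matrix.exp(ℂ, (I·θ) • H) is a continuous one-parameter unitary group. -/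
/-!
Integrating the group law gives `U t * ∫₀^ε U = ∫ₜ^{t+ε} U`. For small `ε` the mean
`ε⁻¹ ∫₀^ε U` is close to `U 0 = 1`, hence invertible, so `U` is differentiable with `U' = U A`,
and uniqueness for this linear ODE gives `U t = exp (t A)`. Unitarity means
`star (U t) = U (-t)`; differentiating at `0` shows that `A` is skew-adjoint, so `H = -i A` is
Hermitian, and it is unique because `i H = U'(0)`. Conversely `exp` of a skew-adjoint matrix
is unitary.
-/

open NormedSpace Filter Topology intervalIntegral

theorem hasDerivAt_intervalIntegral_add_const {E : Type*} [NormedAddCommGroup E]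
    [NormedSpace ℝ E] [CompleteSpace E] {U : ℝ → E} (hU : Continuous U) (ε t : ℝ) :
    HasDerivAt (fun t ↦ ∫ s in t..t + ε, U s) (U (t + ε) - U t) t := by
  have hF : ∀ x, HasDerivAt (fun t ↦ ∫ s in (0 : ℝ)..t, U s) (U x) x := fun x ↦
    integral_hasDerivAt_right (hU.intervalIntegrable _ _)
      hU.aestronglyMeasurable.stronglyMeasurableAtFilter hU.continuousAt
  refine (((hF (t + ε)).comp_add_const t ε).sub (hF t)).congr_of_eventuallyEq
    (Eventually.of_forall fun x ↦ ?_)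
  exact (integral_interval_sub_left (hU.intervalIntegrable _ _) (hU.intervalIntegrable _ _)).symm

section OneParameterGroup

variable {𝔸 : Type*} [NormedRing 𝔸] [NormedAlgebra ℝ 𝔸] [CompleteSpace 𝔸] {U : ℝ → 𝔸}

theorem exists_isUnit_intervalIntegral (hU : Continuous U) (h0 : IsUnit (U 0)) :
    ∃ ε, IsUnit (∫ s in 0..ε, U s) := by
  have hslope : Tendsto (slope (fun t ↦ ∫ s in (0 : ℝ)..t, U s) 0) (𝓝[≠] 0) (𝓝 (U 0)) :=
    (integral_hasDerivAt_right (hU.intervalIntegrable _ _)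
      hU.aestronglyMeasurable.stronglyMeasurableAtFilter hU.continuousAt).tendsto_slope
  obtain ⟨ε, hunit, hε⟩ :=
    ((hslope.eventually (Units.isOpen.mem_nhds h0)).and self_mem_nhdsWithin).exists
  have hmean : ∫ s in 0..ε, U s =
      algebraMap ℝ 𝔸 ε * slope (fun t ↦ ∫ s in (0 : ℝ)..t, U s) 0 ε := by
    rw [← Algebra.smul_def, slope_def_module, smul_smul, sub_zero, mul_inv_cancel₀ hε, one_smul,
      integral_same, sub_zero]
  exact ⟨ε, hmean ▸ ((isUnit_iff_ne_zero.mpr hε).map _).mul hunit⟩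

theorem mul_intervalIntegral_eq (hU : Continuous U) (hadd : ∀ s t, U s * U t = U (s + t))
    (t ε : ℝ) : U t * ∫ s in 0..ε, U s = ∫ s in t..t + ε, U s := by
  have h := (ContinuousLinearMap.mul ℝ 𝔸 (U t)).intervalIntegral_comp_comm
    (hU.intervalIntegrable (μ := MeasureTheory.volume) 0 ε)
  simp only [ContinuousLinearMap.mul_apply', hadd] at h
  rw [← h, integral_comp_add_left (fun s ↦ U s) t, add_zero]

theorem exists_hasDerivAt_eq_mul (hU : Continuous U) (h0 : U 0 = 1)
    (hadd : ∀ s t, U s * U t = U (s + t)) : ∃ A, ∀ t, HasDerivAt U (U t * A) t := by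
  obtain ⟨ε, w, hw⟩ := exists_isUnit_intervalIntegral hU (h0 ▸ isUnit_one)
  have hUt : U = fun t ↦ (∫ s in t..t + ε, U s) * ↑w⁻¹ := by
    ext t
    rw [← mul_intervalIntegral_eq hU hadd, ← hw, mul_assoc, Units.mul_inv, mul_one]
  refine ⟨(U ε - 1) * ↑w⁻¹, fun t ↦ ?_⟩
  have h := (hasDerivAt_intervalIntegral_add_const hU ε t).mul_const (↑w⁻¹ : 𝔸)
  rwa [← hadd, ← mul_sub_one, mul_assoc, ← hUt] at h

theorem eq_exp_smul_of_hasDerivAt_eq_mul {A : 𝔸} (h0 : U 0 = 1)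
    (hA : ∀ t, HasDerivAt U (U t * A) t) : U = fun t ↦ exp (t • A) :=
  ODE_solution_unique_univ (v := fun _ x ↦ x * A) (s := fun _ ↦ Set.univ) (t₀ := 0)
    (fun _ ↦ ((ContinuousLinearMap.mul ℝ 𝔸).flip A).lipschitz.lipschitzOnWith)
    (fun t ↦ ⟨hA t, trivial⟩) (fun t ↦ ⟨hasDerivAt_exp_smul_const A t, trivial⟩)
    (by rw [h0, zero_smul, exp_zero])

theorem exists_eq_exp_smul (hU : Continuous U) (h0 : U 0 = 1)
    (hadd : ∀ s t, U s * U t = U (s + t)) :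
    ∃ A, U = (fun t ↦ exp (t • A)) ∧ HasDerivAt U A 0 := by
  obtain ⟨A, hA⟩ := exists_hasDerivAt_eq_mul hU h0 hadd
  exact ⟨A, eq_exp_smul_of_hasDerivAt_eq_mul h0 hA, by simpa [h0] using hA 0⟩

end OneParameterGroup

theorem star_apply_eq_apply_neg {M : Type*} [Monoid M] [StarMul M] {U : ℝ → M} (h0 : U 0 = 1)
    (hadd : ∀ s t, U s * U t = U (s + t)) (hU : ∀ t, U t ∈ unitary M) (t : ℝ) :
    star (U t) = U (-t) :=
  left_inv_eq_right_inv (Unitary.star_mul_self_of_mem (hU t)) (by rw [hadd, add_neg_cancel, h0])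

theorem mem_skewAdjoint_of_hasDerivAt {E : Type*} [NormedAddCommGroup E] [NormedSpace ℝ E]
    [StarAddMonoid E] [StarModule ℝ E] [ContinuousStar E] {U : ℝ → E} {A : E}
    (hU : ∀ t, star (U t) = U (-t)) (hA : HasDerivAt U A 0) : A ∈ skewAdjoint E := by
  have hneg : HasDerivAt (fun t ↦ U (-t)) (-A) 0 := by
    simpa [Function.comp_def] using hA.scomp_of_eq 0 (hasDerivAt_neg 0) neg_zero.symm
  exact skewAdjoint.mem_iff.mpr (hA.star.unique (by simpa only [hU] using hneg))

theorem I_mul_ofReal_smul {M : Type*} [AddCommGroup M] [Module ℝ M] [Module ℂ M]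
    [IsScalarTower ℝ ℂ M] (θ : ℝ) (x : M) :
    (Complex.I * (θ : ℂ)) • x = θ • (Complex.I • x) := by
  rw [mul_comm, mul_smul, ← Complex.coe_algebraMap, algebraMap_smul]

namespace Matrix

variable {m 𝕜 : Type*} [Fintype m] [DecidableEq m] [RCLike 𝕜]

theorem exp_add_smul (A : Matrix m m 𝕜) (s t : ℝ) :
    exp ((s + t) • A) = exp (s • A) * exp (t • A) := by
  rw [add_smul, exp_add_of_commute _ _ (((Commute.refl A).smul_left s).smul_right t)]

theorem continuous_exp_smul (A : Matrix m m 𝕜) : Continuous fun t : ℝ ↦ exp (t • A) :=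
  open scoped Matrix.Norms.Operator in (differentiable_exp_smul_const ℝ A).continuous

theorem exp_mem_unitaryGroup {A : Matrix m m 𝕜} (hA : A ∈ skewAdjoint (Matrix m m 𝕜)) :
    exp A ∈ unitaryGroup m 𝕜 := by
  rw [Unitary.mem_iff, star_exp, skewAdjoint.mem_iff.mp hA,
    ← exp_add_of_commute _ _ (Commute.refl A).neg_left,
    ← exp_add_of_commute _ _ (Commute.refl A).neg_right, neg_add_cancel, add_neg_cancel, exp_zero,
    and_self]

end Matrix

open scoped Matrix

attribute [local instance] Matrix.normedAddCommGroup Matrix.normedSpace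

/-- Stone's theorem in finite dimensions: continuous one-parameter unitary groups of
`n×n` complex matrices correspond exactly to Hermitian `n×n` matrices.  (i) Every
continuous one-parameter unitary group `U` is of the form `U(θ) = exp((I·θ) • H)` for a
unique Hermitian `H` (with `H = −i·U'(0)`, i.e. `U'(0) = I • H`); (ii) conversely for every
Hermitian `H` the map `θ ↦ exp((I·θ) • H)` is a continuous one-parameter unitary group. -/
theorem stmt_15 (n : ℕ) :
    (∀ U : ℝ → Matrix (Fin n) (Fin n) ℂ,
      Continuous U → U 0 = 1 → (∀ θ θ' : ℝ, U θ * U θ' = U (θ + θ')) →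
      (∀ θ : ℝ, U θ ∈ Matrix.unitaryGroup (Fin n) ℂ) →
      ∃! H : Matrix (Fin n) (Fin n) ℂ, H.conjTranspose = H ∧
        (∀ θ : ℝ, U θ = NormedSpace.exp ((Complex.I * (θ : ℂ)) • H)) ∧
        HasDerivAt U (Complex.I • H) 0) ∧
    (∀ H : Matrix (Fin n) (Fin n) ℂ, H.conjTranspose = H →
      Continuous (fun θ : ℝ => NormedSpace.exp ((Complex.I * (θ : ℂ)) • H)) ∧
      NormedSpace.exp ((Complex.I * ((0 : ℝ) : ℂ)) • H) = 1 ∧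
      (∀ θ θ' : ℝ,
        NormedSpace.exp ((Complex.I * (θ : ℂ)) • H) *
            NormedSpace.exp ((Complex.I * (θ' : ℂ)) • H) =
          NormedSpace.exp ((Complex.I * ((θ + θ' : ℝ) : ℂ)) • H)) ∧
      (∀ θ : ℝ,
        NormedSpace.exp ((Complex.I * (θ : ℂ)) • H) ∈ Matrix.unitaryGroup (Fin n) ℂ)) := by
  have hI : Complex.I ∈ skewAdjoint ℂ := skewAdjoint.mem_iff.mpr Complex.conj_I
  simp only [I_mul_ofReal_smul]
  refine ⟨fun U hU h0 hadd hunit ↦ ?_, fun H hH ↦ ?_⟩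
  · -- The entrywise sup norm is not submultiplicative; the operator norm gives the same topology.
    obtain ⟨A, rfl, hA⟩ : ∃ A, U = (fun t : ℝ ↦ exp (t • A)) ∧ HasDerivAt U A 0 :=
      open scoped Matrix.Norms.Operator in exists_eq_exp_smul hU h0 hadd
    have hskew := mem_skewAdjoint_of_hasDerivAt (star_apply_eq_apply_neg h0 hadd hunit) hA
    have hIA : Complex.I • (-Complex.I) • A = A := by
      rw [smul_smul, mul_neg, Complex.I_mul_I, neg_neg, one_smul]
    refine ⟨(-Complex.I) • A,
      ⟨isSelfAdjoint_smul_of_mem_skewAdjoint (neg_mem hI) hskew, fun θ ↦ by rw [hIA],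
        by rwa [hIA]⟩,
      fun H ⟨_, _, hH⟩ ↦ smul_right_injective _ Complex.I_ne_zero ((hH.unique hA).trans hIA.symm)⟩
  · have hIH : Complex.I • H ∈ skewAdjoint _ := IsSelfAdjoint.smul_mem_skewAdjoint hI hH
    exact ⟨Matrix.continuous_exp_smul _, by rw [zero_smul, exp_zero],
      fun s t ↦ (Matrix.exp_add_smul _ s t).symm,
      fun θ ↦ Matrix.exp_mem_unitaryGroup (skewAdjoint.smul_mem θ hIH)⟩
end

section
/- (Hamiltonian characterisation of unitary groups) Let U : ℝ → Matrix (Fin n) (Fin n) ℂ with U(0) = 1. Then U is a continuous one-parameter unitary group (U is continuous, U(θ)·U(θ') = U(θ + θ') for all θ, θ', and every U(θ) is unitary) if and only if there exists a constant Hermitian matrix H such that U satisfies the differential equation ∂U = i·H·U, i.e. HasDerivAt U ((I • H) * U(θ)) θ for every θ ∈ ℝ. -/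
/-!
Both directions go through the generator `A = U'(0)`. If `U` is a continuous one-parameter group,
then for small `ε ≠ 0` the integral `∫₀^ε U` is invertible, and the group law gives
`U t = (∫₀^ε U)⁻¹ (∫₀^{t+ε} U - ∫₀^t U)`, which is differentiable with `U' = A U`;
differentiating `star U * U = 1` at `0` shows that `A` is skew-adjoint. Conversely, solutions of
`X' = A X` are unique, so `t ↦ U (t + s)` and `t ↦ U t * U s` coincide, and for skew-adjoint `A`
the derivative of `star U * U` vanishes. For matrices, `A = i H` with `H` Hermitian.
-/

open Filter Topology intervalIntegral

section NormedAlgebra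

variable {𝔸 : Type*} [NormedRing 𝔸] [NormedAlgebra ℝ 𝔸]

theorem eq_of_hasDerivAt_mul_left {U V : ℝ → 𝔸} {A : 𝔸}
    (hU : ∀ t, HasDerivAt U (A * U t) t) (hV : ∀ t, HasDerivAt V (A * V t) t) {t₀ : ℝ}
    (h : U t₀ = V t₀) : U = V :=
  ODE_solution_unique_univ (v := fun _ x => A * x) (s := fun _ => Set.univ)
    (fun _ => (ContinuousLinearMap.mul ℝ 𝔸 A).lipschitz.lipschitzOnWith)
    (fun t => ⟨hU t, trivial⟩) (fun t => ⟨hV t, trivial⟩) h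

theorem map_add_of_hasDerivAt_mul_left {U : ℝ → 𝔸} {A : 𝔸} (hU0 : U 0 = 1)
    (hU : ∀ t, HasDerivAt U (A * U t) t) (s t : ℝ) : U s * U t = U (s + t) := by
  have hsolutions : (fun s => U s * U t) = fun s => U (s + t) := by
    refine eq_of_hasDerivAt_mul_left (A := A) (t₀ := 0) (fun s => ?_) (fun s => ?_)
      (by simp [hU0])
    · simpa only [mul_assoc] using (hU s).mul_const (U t)
    · simpa using (hU (s + t)).comp_add_const s t
  exact congrFun hsolutions s

section Complete

variable [CompleteSpace 𝔸]

theorem exists_ne_zero_isUnit_integral {U : ℝ → 𝔸} (hU : Continuous U) (h0 : IsUnit (U 0)) :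
    ∃ ε ≠ 0, IsUnit (∫ s in (0 : ℝ)..ε, U s) := by
  have hslope : Tendsto (slope (fun x => ∫ s in (0 : ℝ)..x, U s) 0) (𝓝[≠] 0) (𝓝 (U 0)) :=
    hasDerivAt_iff_tendsto_slope.mp (hU.integral_hasStrictDerivAt 0 0).hasDerivAt
  obtain ⟨ε, hunit, hε⟩ :=
    ((hslope.eventually (Units.isOpen.mem_nhds h0)).and self_mem_nhdsWithin).exists
  simp only [slope_def_module, integral_same, sub_zero] at hunit
  exact ⟨ε, hε, (isUnit_smul_iff (Units.mk0 ε⁻¹ (inv_ne_zero hε)) _).mp hunit⟩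

theorem integral_add_sub_integral_eq_integral_mul {U : ℝ → 𝔸} (hU : Continuous U)
    (hadd : ∀ s t, U s * U t = U (s + t)) (ε t : ℝ) :
    (∫ s in (0 : ℝ)..t + ε, U s) - ∫ s in (0 : ℝ)..t, U s = (∫ s in (0 : ℝ)..ε, U s) * U t := by
  have hshift : ∫ s in t..t + ε, U s = ∫ s in (0 : ℝ)..ε, U (s + t) := by
    rw [integral_comp_add_right, zero_add, add_comm]
  rw [integral_interval_sub_left (hU.intervalIntegrable _ _) (hU.intervalIntegrable _ _), hshift]
  simp only [← hadd]
  exact ((ContinuousLinearMap.mul ℝ 𝔸).flip (U t)).intervalIntegral_comp_comm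
    (hU.intervalIntegrable _ _)

theorem exists_hasDerivAt_mul_left_of_continuous_of_map_add {U : ℝ → 𝔸} (hU0 : U 0 = 1)
    (hU : Continuous U) (hadd : ∀ s t, U s * U t = U (s + t)) :
    ∃ A : 𝔸, ∀ t, HasDerivAt U (A * U t) t := by
  set F : ℝ → 𝔸 := fun x => ∫ s in (0 : ℝ)..x, U s
  have hF : ∀ x, HasDerivAt F (U x) x := fun x => (hU.integral_hasStrictDerivAt 0 x).hasDerivAt
  obtain ⟨ε, -, V, hV⟩ := exists_ne_zero_isUnit_integral hU (hU0 ▸ isUnit_one)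
  have hUF : U = fun t => ↑V⁻¹ * (F (t + ε) - F t) := by
    funext t
    rw [integral_add_sub_integral_eq_integral_mul hU hadd, ← hV, Units.inv_mul_cancel_left]
  refine ⟨↑V⁻¹ * (U ε - 1), fun t => ?_⟩
  convert ((hF (t + ε)).comp_add_const t ε |>.sub (hF t)).const_mul (↑V⁻¹ : 𝔸) using 1
  · exact hUF
  · rw [mul_assoc, sub_mul, one_mul, hadd, add_comm]

end Complete

section Star

variable [StarRing 𝔸] [StarModule ℝ 𝔸] [ContinuousStar 𝔸]

theorem HasDerivAt.star_mul_self {U : ℝ → 𝔸} {D : 𝔸} {t : ℝ} (h : HasDerivAt U D t) :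
    HasDerivAt (fun s => star (U s) * U s) (star D * U t + star (U t) * D) t :=
  h.star.mul h

theorem mem_skewAdjoint_of_hasDerivAt_s16 {U : ℝ → 𝔸} {A : 𝔸} (hU0 : U 0 = 1)
    (hU : HasDerivAt U A 0) (hunit : ∀ t, star (U t) * U t = 1) : A ∈ skewAdjoint 𝔸 := by
  have hconst : HasDerivAt (fun s => star (U s) * U s) 0 0 := by
    simpa only [hunit] using hasDerivAt_const (0 : ℝ) (1 : 𝔸)
  have h := hU.star_mul_self.unique hconst
  rw [hU0, star_one, one_mul, mul_one] at h
  exact skewAdjoint.mem_iff.mpr (eq_neg_of_add_eq_zero_left h)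

theorem star_mul_self_of_hasDerivAt_mul_left {U : ℝ → 𝔸} {A : 𝔸} (hA : A ∈ skewAdjoint 𝔸)
    (hU0 : U 0 = 1) (hU : ∀ t, HasDerivAt U (A * U t) t) (t : ℝ) : star (U t) * U t = 1 := by
  have hderiv : ∀ s, HasDerivAt (fun s => star (U s) * U s) 0 s := fun s => by
    convert (hU s).star_mul_self using 1
    rw [star_mul, skewAdjoint.mem_iff.mp hA]
    noncomm_ring
  simpa [hU0] using is_const_of_deriv_eq_zero (fun s => (hderiv s).differentiableAt)
    (fun s => (hderiv s).deriv) t 0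

theorem mem_unitary_of_hasDerivAt_mul_left {U : ℝ → 𝔸} {A : 𝔸} (hA : A ∈ skewAdjoint 𝔸)
    (hU0 : U 0 = 1) (hU : ∀ t, HasDerivAt U (A * U t) t) (t : ℝ) : U t ∈ unitary 𝔸 := by
  have hinv : ∀ s, U s * U (-s) = 1 := fun s => by
    rw [map_add_of_hasDerivAt_mul_left hU0 hU, add_neg_cancel, hU0]
  have hstar : star (U t) = U (-t) :=
    left_inv_eq_right_inv (star_mul_self_of_hasDerivAt_mul_left hA hU0 hU t) (hinv t)
  rw [Unitary.mem_iff, hstar]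
  exact ⟨by simpa using hinv (-t), hinv t⟩

theorem continuous_map_add_mem_unitary_iff_exists_skewAdjoint [CompleteSpace 𝔸] {U : ℝ → 𝔸}
    (hU0 : U 0 = 1) :
    (Continuous U ∧ (∀ s t, U s * U t = U (s + t)) ∧ ∀ t, U t ∈ unitary 𝔸) ↔
      ∃ A ∈ skewAdjoint 𝔸, ∀ t, HasDerivAt U (A * U t) t := by
  constructor
  · rintro ⟨hcont, hadd, hunit⟩
    obtain ⟨A, hA⟩ := exists_hasDerivAt_mul_left_of_continuous_of_map_add hU0 hcont hadd
    refine ⟨A, mem_skewAdjoint_of_hasDerivAt_s16 hU0 ?_ fun t => (hunit t).1, hA⟩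
    simpa [hU0] using hA 0
  · rintro ⟨A, hA, hU⟩
    exact ⟨continuous_iff_continuousAt.mpr fun t => (hU t).continuousAt,
      map_add_of_hasDerivAt_mul_left hU0 hU, mem_unitary_of_hasDerivAt_mul_left hA hU0 hU⟩

end Star

end NormedAlgebra

open scoped Matrix

attribute [local instance] Matrix.normedAddCommGroup Matrix.normedSpace

/-- Hamiltonian characterisation of unitary groups: a map `U : ℝ → Matrix (Fin n) (Fin n) ℂ`
with `U(0) = 1` is a continuous one-parameter unitary group if and only if there is a
constant Hermitian matrix `H` such that `U` satisfies the differential equation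
`∂U = i·H·U`, i.e. `HasDerivAt U ((I • H) * U θ) θ` for every `θ`. -/
theorem stmt_16 {n : ℕ} (U : ℝ → Matrix (Fin n) (Fin n) ℂ) (hU0 : U 0 = 1) :
    (Continuous U ∧ (∀ θ θ' : ℝ, U θ * U θ' = U (θ + θ')) ∧
      (∀ θ : ℝ, U θ ∈ Matrix.unitaryGroup (Fin n) ℂ)) ↔
    (∃ H : Matrix (Fin n) (Fin n) ℂ, H.conjTranspose = H ∧
      ∀ θ : ℝ, HasDerivAt U ((Complex.I • H) * U θ) θ) := by
  -- the C*-norm on matrices induces their usual topology, so derivatives are unaffected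
  open scoped Matrix.Norms.L2Operator in
  have hI : Complex.I ∈ skewAdjoint ℂ := skewAdjoint.mem_iff.mpr Complex.conj_I
  refine (continuous_map_add_mem_unitary_iff_exists_skewAdjoint hU0).trans ⟨?_, ?_⟩
  · rintro ⟨A, hA, hU⟩
    refine ⟨-Complex.I • A, isSelfAdjoint_smul_of_mem_skewAdjoint (neg_mem hI) hA, ?_⟩
    simpa [smul_smul] using hU
  · rintro ⟨H, hH, hU⟩
    exact ⟨Complex.I • H, IsSelfAdjoint.smul_mem_skewAdjoint hI hH, hU⟩
end
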